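/- Let G be a group generated by elements a_1,…,a_m (m ≥ 2) which is δ-hyperbolic. Let ℓ and a be integers with 1 ≤ a ≤ ℓ, and suppose |B_ℓ| ≥ 2|B_{ℓ−a+2δ}|. Then |B_{2ℓ}| ≥ (|B_ℓ| − 2|B_{ℓ−a+2δ}|)² / |B_{6a+2δ}|. -/

import Mathlib

/-!
Let `A` be the annulus `ℓ - a < ‖x‖ ≤ ℓ`, so that `|A| ≥ |B_ℓ| - |B_{ℓ-a+2δ}|`, and count pairs
`(x, y) ∈ A × A`. If `‖xy‖ < 2ℓ - 4a`, the Gromov product `(x⁻¹, y)` exceeds `a`, so `y` lies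
within `ℓ - a + 2δ` of the point at distance `a` on a geodesic to `x⁻¹`: there are at most
`|A| |B_{ℓ-a+2δ}|` such pairs. If `‖xy‖ ≥ 2ℓ - 4a`, then by thinness of the triangle
`1, x, xy` all first factors of pairs with a given product `z` lie within `5a + 2δ` of each other:
there are at most `|B_{2ℓ}| |B_{5a+2δ}|` such pairs. Hence
`|A|² ≤ |B_{2ℓ}| |B_{6a+2δ}| + |A| |B_{ℓ-a+2δ}|`, which rearranges to the claim; when `ℓ < 2a`
the claim is trivial since `B_ℓ ⊆ B_{2ℓ} ⊆ B_{6a+2δ}`.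
-/

open Filter Set

namespace GrowthRQ

variable {G : Type*} [Group G] {m : ℕ}

/-- Word norm with respect to the generators `gen i` and their inverses. -/
noncomputable def wordNorm (gen : Fin m → G) (x : G) : ℕ :=
  sInf {n | ∃ w : List (Fin m × Bool), w.length = n ∧
    (w.map (fun p => if p.2 then gen p.1 else (gen p.1)⁻¹)).prod = x}

/-- Ball of (real) radius `r` for the word norm. -/
def ball (gen : Fin m → G) (r : ℝ) : Set G := {x | (wordNorm gen x : ℝ) ≤ r}

/-- Annulus of elements of norm in `(ℓ - a, ℓ]`. -/
def ann (gen : Fin m → G) (ℓ a : ℝ) : Set G := ball gen ℓ \ ball gen (ℓ - a)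

/-- Growth exponent in base `2m-1`. (The limit exists by submultiplicativity,
so it equals the `limsup`.) -/
noncomputable def growthExponent (gen : Fin m → G) : ℝ :=
  Filter.limsup (fun L : ℕ => Real.logb (2 * (m : ℝ) - 1) ((ball gen L).ncard) / L) Filter.atTop

/-- Gromov product with origin `e`. -/
noncomputable def gromov (gen : Fin m → G) (x y : G) : ℝ :=
  ((wordNorm gen x : ℝ) + (wordNorm gen y : ℝ) - (wordNorm gen (x⁻¹ * y) : ℝ)) / 2

/-- `δ`-hyperbolicity via the Gromov product. -/
def IsHyperbolic (gen : Fin m → G) (δ : ℝ) : Prop :=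
  ∀ x y z : G, gromov gen x z ≥ min (gromov gen x y) (gromov gen y z) - δ

/-- Non-elementary: not virtually cyclic. -/
def NonElementary (G : Type*) [Group G] : Prop :=
  ¬ ∃ H : Subgroup G, H.index ≠ 0 ∧ IsCyclic H

/-- Probability, for `N` independent uniform choices of relators in the ball of radius `ℓ`,
that the chosen tuple satisfies `P`. -/
noncomputable def quotProb (gen : Fin m → G) (ℓ N : ℕ) (P : (Fin N → G) → Prop) : ℝ :=
  (({r : Fin N → G | (∀ i, r i ∈ ball gen (ℓ : ℝ)) ∧ P r}).ncard : ℝ) /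
  (({r : Fin N → G | ∀ i, r i ∈ ball gen (ℓ : ℝ)}).ncard : ℝ)

/-- Images of the generators in the quotient by the normal closure of the relators. -/
noncomputable def quotGen (gen : Fin m → G) {N : ℕ} (r : Fin N → G) :
    Fin m → G ⧸ Subgroup.normalClosure (Set.range r) :=
  fun i => QuotientGroup.mk (gen i)

/-- Evaluation of a word in the letters `gen i` (`true`) and `(gen i)⁻¹` (`false`). -/
def evalWord (gen : Fin m → G) (w : List (Fin m × Bool)) : G :=
  (w.map (fun p => if p.2 then gen p.1 else (gen p.1)⁻¹)).prod

def invWord (w : List (Fin m × Bool)) : List (Fin m × Bool) :=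
  (w.map fun p => (p.1, !p.2)).reverse

section WordNorm

variable {gen : Fin m → G}

@[simp]
lemma evalWord_append (w₁ w₂ : List (Fin m × Bool)) :
    evalWord gen (w₁ ++ w₂) = evalWord gen w₁ * evalWord gen w₂ := by
  simp [evalWord]

lemma evalWord_invWord (w : List (Fin m × Bool)) :
    evalWord gen (invWord w) = (evalWord gen w)⁻¹ := by
  induction w with
  | nil => simp [evalWord, invWord]
  | cons p w ih =>
    rcases p with ⟨i, _ | _⟩ <;> simp_all [evalWord, invWord]

lemma wordNorm_le_length {w : List (Fin m × Bool)} {x : G} (h : evalWord gen w = x) :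
    wordNorm gen x ≤ w.length :=
  Nat.sInf_le ⟨w, rfl, h⟩

lemma wordNorm_one : wordNorm gen 1 = 0 :=
  Nat.le_zero.mp (wordNorm_le_length (w := []) rfl)

lemma exists_evalWord_eq (hgen : Subgroup.closure (Set.range gen) = ⊤) (x : G) :
    ∃ w, evalWord gen w = x := by
  have hx : x ∈ Subgroup.closure (Set.range gen) := hgen ▸ Subgroup.mem_top x
  induction hx using Subgroup.closure_induction with
  | mem _ hg =>
    obtain ⟨i, rfl⟩ := hg
    exact ⟨[(i, true)], by simp [evalWord]⟩
  | one => exact ⟨[], rfl⟩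
  | mul _ _ _ _ h₁ h₂ =>
    obtain ⟨w₁, rfl⟩ := h₁
    obtain ⟨w₂, rfl⟩ := h₂
    exact ⟨w₁ ++ w₂, evalWord_append w₁ w₂⟩
  | inv _ _ h =>
    obtain ⟨w, rfl⟩ := h
    exact ⟨invWord w, evalWord_invWord w⟩

lemma exists_length_eq_wordNorm (hgen : Subgroup.closure (Set.range gen) = ⊤) (x : G) :
    ∃ w, w.length = wordNorm gen x ∧ evalWord gen w = x := by
  obtain ⟨w, hw⟩ := exists_evalWord_eq hgen x
  exact Nat.sInf_mem (s := {n | ∃ w, w.length = n ∧ evalWord gen w = x}) ⟨w.length, w, rfl, hw⟩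

lemma wordNorm_mul_le (hgen : Subgroup.closure (Set.range gen) = ⊤) (x y : G) :
    wordNorm gen (x * y) ≤ wordNorm gen x + wordNorm gen y := by
  obtain ⟨w₁, hl₁, rfl⟩ := exists_length_eq_wordNorm hgen x
  obtain ⟨w₂, hl₂, rfl⟩ := exists_length_eq_wordNorm hgen y
  simpa [hl₁, hl₂] using wordNorm_le_length (evalWord_append w₁ w₂)

lemma wordNorm_inv (hgen : Subgroup.closure (Set.range gen) = ⊤) (x : G) :
    wordNorm gen x⁻¹ = wordNorm gen x := by
  have key (z : G) : wordNorm gen z⁻¹ ≤ wordNorm gen z := by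
    obtain ⟨w, hl, rfl⟩ := exists_length_eq_wordNorm hgen z
    simpa [invWord, hl] using wordNorm_le_length (evalWord_invWord w)
  exact le_antisymm (key x) (by simpa using key x⁻¹)

lemma exists_geodesic_prefix (hgen : Subgroup.closure (Set.range gen) = ⊤) {x : G} {a : ℕ}
    (hax : a ≤ wordNorm gen x) :
    ∃ p : G, wordNorm gen p = a ∧ a + wordNorm gen (p⁻¹ * x) = wordNorm gen x := by
  obtain ⟨w, hl, rfl⟩ := exists_length_eq_wordNorm hgen x
  have hsplit := evalWord_append (gen := gen) (w.take a) (w.drop a)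
  rw [List.take_append_drop] at hsplit
  have hp := wordNorm_le_length (gen := gen) (w := w.take a) rfl
  have hs := wordNorm_le_length (gen := gen) (w := w.drop a)
    (x := (evalWord gen (w.take a))⁻¹ * evalWord gen w) (by rw [hsplit, inv_mul_cancel_left])
  have htri := wordNorm_mul_le hgen (evalWord gen (w.take a))
    ((evalWord gen (w.take a))⁻¹ * evalWord gen w)
  rw [mul_inv_cancel_left] at htri
  simp only [List.length_take, List.length_drop] at hp hs
  exact ⟨evalWord gen (w.take a), by omega, by omega⟩

lemma mul_mem_ball (hgen : Subgroup.closure (Set.range gen) = ⊤) {x y : G} {r s : ℝ}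
    (hx : x ∈ ball gen r) (hy : y ∈ ball gen s) : x * y ∈ ball gen (r + s) := by
  have : (wordNorm gen (x * y) : ℝ) ≤ wordNorm gen x + wordNorm gen y := by
    exact_mod_cast wordNorm_mul_le hgen x y
  exact this.trans (add_le_add hx hy)

lemma ball_mono {r r' : ℝ} (h : r ≤ r') : ball gen r ⊆ ball gen r' :=
  fun _ hx => le_trans hx h

lemma ball_finite (hgen : Subgroup.closure (Set.range gen) = ⊤) (r : ℝ) :
    (ball gen r).Finite := by
  refine ((List.finite_length_le (Fin m × Bool) ⌊r⌋₊).image (evalWord gen)).subset ?_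
  intro x hx
  obtain ⟨w, hl, he⟩ := exists_length_eq_wordNorm hgen x
  exact ⟨w, show w.length ≤ ⌊r⌋₊ from hl ▸ Nat.le_floor hx, he⟩

lemma ncard_ball_le_ncard_ann_add (hgen : Subgroup.closure (Set.range gen) = ⊤) (ℓ a : ℝ) :
    (ball gen ℓ).ncard ≤ (ann gen ℓ a).ncard + (ball gen (ℓ - a)).ncard :=
  Set.ncard_le_ncard_sdiff_add_ncard _ _ (ball_finite hgen _)

lemma ncard_ball_pos (hgen : Subgroup.closure (Set.range gen) = ⊤) {r : ℝ} (hr : 0 ≤ r) :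
    0 < (ball gen r).ncard :=
  (Set.ncard_pos (ball_finite hgen r)).mpr ⟨1, by simpa [ball, wordNorm_one] using hr⟩

end WordNorm

section Hyperbolic

variable {gen : Fin m → G} {δ : ℝ}

lemma wordNorm_inv_mul_eq (x y : G) :
    (wordNorm gen (x⁻¹ * y) : ℝ) = wordNorm gen x + wordNorm gen y - 2 * gromov gen x y := by
  rw [gromov]; ring

lemma IsHyperbolic.nonneg (hhyp : IsHyperbolic gen δ) : 0 ≤ δ := by
  have := hhyp 1 1 1
  simp only [gromov, inv_one, mul_one, wordNorm_one, min_self] at this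
  linarith

lemma IsHyperbolic.wordNorm_inv_mul_le (hhyp : IsHyperbolic gen δ) {x y z : G} {t : ℝ}
    (hxy : t ≤ gromov gen x y) (hyz : t ≤ gromov gen y z) :
    (wordNorm gen (x⁻¹ * z) : ℝ) ≤ wordNorm gen x + wordNorm gen z - 2 * t + 2 * δ := by
  have := hhyp x y z
  rw [wordNorm_inv_mul_eq]
  linarith [le_min hxy hyz]

lemma mem_ann_iff {ℓ a : ℝ} {x : G} :
    x ∈ ann gen ℓ a ↔ ℓ - a < wordNorm gen x ∧ (wordNorm gen x : ℝ) ≤ ℓ := by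
  simp [ann, ball, and_comm]

variable {ℓ a : ℝ}

lemma wordNorm_inv_mul_le_of_wordNorm_mul_lt (hgen : Subgroup.closure (Set.range gen) = ⊤)
    (hhyp : IsHyperbolic gen δ) {x y p : G} (hx : x ∈ ann gen ℓ a)
    (hy : y ∈ ann gen ℓ a) (hp : (wordNorm gen p : ℝ) = a) (hpx : a ≤ gromov gen p x⁻¹)
    (hxy : (wordNorm gen (x * y) : ℝ) < 2 * ℓ - 4 * a) :
    (wordNorm gen (p⁻¹ * y) : ℝ) ≤ ℓ - a + 2 * δ := by
  rw [mem_ann_iff] at hx hy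
  have hxy' : a ≤ gromov gen x⁻¹ y := by
    rw [gromov, inv_inv, wordNorm_inv hgen]
    linarith
  linarith [hhyp.wordNorm_inv_mul_le hpx hxy']

lemma wordNorm_inv_mul_le_of_mul_eq (hgen : Subgroup.closure (Set.range gen) = ⊤)
    (hhyp : IsHyperbolic gen δ) {x y x₀ y₀ : G} (hx : x ∈ ann gen ℓ a)
    (hx₀ : x₀ ∈ ann gen ℓ a) (hy : (wordNorm gen y : ℝ) ≤ ℓ) (hy₀ : (wordNorm gen y₀ : ℝ) ≤ ℓ)
    (heq : x * y = x₀ * y₀) (hxy : 2 * ℓ - 4 * a ≤ wordNorm gen (x * y)) :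
    (wordNorm gen (x₀⁻¹ * x) : ℝ) ≤ 5 * a + 2 * δ := by
  rw [mem_ann_iff] at hx hx₀
  have h₁ : (2 * ℓ - 5 * a) / 2 ≤ gromov gen x₀ (x * y) := by
    rw [gromov, heq, inv_mul_cancel_left, ← heq]
    linarith
  have h₂ : (2 * ℓ - 5 * a) / 2 ≤ gromov gen (x * y) x := by
    rw [gromov, mul_inv_rev, inv_mul_cancel_right, wordNorm_inv hgen]
    linarith
  linarith [hhyp.wordNorm_inv_mul_le h₁ h₂]

end Hyperbolic

section Counting

variable {P : Set (G × G)}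

lemma ncard_le_ncard_mul_ncard_of_inv_mul_mem {S D : Set G} (hS : S.Finite) (hD : D.Finite)
    (f : G → G) (hP : ∀ q ∈ P, q.1 ∈ S ∧ (f q.1)⁻¹ * q.2 ∈ D) :
    P.ncard ≤ S.ncard * D.ncard := by
  rw [← Set.ncard_prod]
  refine Set.ncard_le_ncard_of_injOn (fun q => (q.1, (f q.1)⁻¹ * q.2))
    (fun q hq => Set.mk_mem_prod (hP q hq).1 (hP q hq).2) ?_ (hS.prod hD)
  rintro ⟨x, y⟩ - ⟨x', y'⟩ - h
  simp only [Prod.mk.injEq] at h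
  obtain ⟨rfl, h⟩ := h
  rw [mul_left_cancel h]

/-- Pairs are counted by their product `z ∈ T` and by the position of their first factor
relative to that of a fixed pair with product `z`. -/
lemma ncard_le_ncard_mul_ncard_of_mul_eq {T K : Set G} (hT : T.Finite) (hK : K.Finite)
    (hPT : ∀ q ∈ P, q.1 * q.2 ∈ T)
    (hPK : ∀ q ∈ P, ∀ q' ∈ P, q.1 * q.2 = q'.1 * q'.2 → q'.1⁻¹ * q.1 ∈ K) :
    P.ncard ≤ T.ncard * K.ncard := by
  classical
  let c : G → G × G := Function.invFunOn (fun q : G × G => q.1 * q.2) P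
  have hc : ∀ q ∈ P, c (q.1 * q.2) ∈ P ∧ (c (q.1 * q.2)).1 * (c (q.1 * q.2)).2 = q.1 * q.2 :=
    fun q hq => Function.invFunOn_pos ⟨q, hq, rfl⟩
  rw [← Set.ncard_prod]
  refine Set.ncard_le_ncard_of_injOn (fun q => (q.1 * q.2, (c (q.1 * q.2)).1⁻¹ * q.1))
    (fun q hq => Set.mk_mem_prod (hPT q hq) (hPK q hq _ (hc q hq).1 (hc q hq).2.symm)) ?_
    (hT.prod hK)
  rintro ⟨x, y⟩ - ⟨x', y'⟩ - h
  simp only [Prod.mk.injEq] at h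
  obtain ⟨hxy, h⟩ := h
  rw [hxy] at h
  obtain rfl := mul_left_cancel h
  rw [mul_left_cancel hxy]

end Counting

variable {gen : Fin m → G} {δ : ℝ}

lemma ncard_ann_sq_le (hgen : Subgroup.closure (Set.range gen) = ⊤) (hhyp : IsHyperbolic gen δ)
    {ℓ : ℝ} {a : ℕ} (h2a : 2 * a ≤ ℓ) :
    (ann gen ℓ a).ncard ^ 2 ≤ (ball gen (2 * ℓ)).ncard * (ball gen (5 * a + 2 * δ)).ncard
      + (ann gen ℓ a).ncard * (ball gen (ℓ - a + 2 * δ)).ncard := by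
  set S := ann gen ℓ a
  have hS : S.Finite := (ball_finite hgen ℓ).sdiff
  have hSS := Set.ncard_inter_add_ncard_sdiff_eq_ncard (S ×ˢ S)
    {q | (wordNorm gen (q.1 * q.2) : ℝ) < 2 * ℓ - 4 * a} (hS.prod hS)
  have hprefix : ∀ x ∈ S, ∃ p, (wordNorm gen p : ℝ) = a ∧ (a : ℝ) ≤ gromov gen p x⁻¹ := by
    intro x hx
    have hax : (a : ℝ) ≤ wordNorm gen x⁻¹ := by
      rw [wordNorm_inv hgen]; linarith [(mem_ann_iff.mp hx).1]
    obtain ⟨p, hp, hpx⟩ := exists_geodesic_prefix hgen (Nat.cast_le.mp hax)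
    refine ⟨p, by exact_mod_cast hp, ?_⟩
    rw [gromov, ← hpx, hp]
    push_cast
    linarith
  choose! f hf using hprefix
  have hshort := ncard_le_ncard_mul_ncard_of_inv_mul_mem hS (ball_finite hgen (ℓ - a + 2 * δ))
    (P := S ×ˢ S ∩ {q | (wordNorm gen (q.1 * q.2) : ℝ) < 2 * ℓ - 4 * a}) f
    fun q ⟨⟨hx, hy⟩, hxy⟩ => ⟨hx, wordNorm_inv_mul_le_of_wordNorm_mul_lt hgen hhyp hx hy
      (hf q.1 hx).1 (hf q.1 hx).2 hxy⟩
  have hlong := ncard_le_ncard_mul_ncard_of_mul_eq (ball_finite hgen (2 * ℓ))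
    (ball_finite hgen (5 * a + 2 * δ))
    (P := S ×ˢ S \ {q | (wordNorm gen (q.1 * q.2) : ℝ) < 2 * ℓ - 4 * a})
    (fun q ⟨⟨hx, hy⟩, _⟩ => two_mul ℓ ▸ mul_mem_ball hgen hx.1 hy.1)
    fun q ⟨⟨hx, hy⟩, hxy⟩ q' ⟨⟨hx', hy'⟩, _⟩ heq =>
      wordNorm_inv_mul_le_of_mul_eq hgen hhyp hx hx' (mem_ann_iff.mp hy).2
        (mem_ann_iff.mp hy').2 heq (not_lt.mp hxy)
  rw [sq, ← Set.ncard_prod, ← hSS]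
  linarith

lemma sq_sub_two_mul_le {s d b t : ℝ} (hd : 0 ≤ d) (hb : 2 * d ≤ b) (hs : b ≤ s + d)
    (h : s ^ 2 ≤ t + s * d) : (b - 2 * d) ^ 2 ≤ t := by
  nlinarith [mul_le_mul (by linarith : b - 2 * d ≤ s) (by linarith : b - 2 * d ≤ s - d)
    (by linarith) (by linarith)]

theorem statement11_general {G : Type*} [Group G] {m : ℕ} (gen : Fin m → G)
    (hgen : Subgroup.closure (Set.range gen) = ⊤)
    (δ : ℝ) (hhyp : IsHyperbolic gen δ)
    (ℓ a : ℕ)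
    (hbig : ((ball gen (ℓ : ℝ)).ncard : ℝ) ≥ 2 * ((ball gen ((ℓ : ℝ) - a + 2 * δ)).ncard : ℝ)) :
    ((ball gen (2 * (ℓ : ℝ))).ncard : ℝ) ≥
      (((ball gen (ℓ : ℝ)).ncard : ℝ) - 2 * ((ball gen ((ℓ : ℝ) - a + 2 * δ)).ncard : ℝ)) ^ 2 /
        ((ball gen (6 * (a : ℝ) + 2 * δ)).ncard : ℝ) := by
  have hδ := hhyp.nonneg
  have hcard {r r' : ℝ} (h : r ≤ r') : ((ball gen r).ncard : ℝ) ≤ (ball gen r').ncard := by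
    exact_mod_cast Set.ncard_le_ncard (ball_mono h) (ball_finite hgen r')
  rw [ge_iff_le, div_le_iff₀ (by exact_mod_cast ncard_ball_pos hgen (by positivity))]
  have hd : (0 : ℝ) ≤ (ball gen ((ℓ : ℝ) - a + 2 * δ)).ncard := Nat.cast_nonneg _
  rcases lt_or_ge (ℓ : ℝ) (2 * a) with hℓ | hℓ
  · nlinarith [hcard (by linarith : (ℓ : ℝ) ≤ 2 * ℓ), hcard (by linarith : (ℓ : ℝ) ≤ 6 * a + 2 * δ)]
  · have hann : ((ball gen ℓ).ncard : ℝ) ≤ (ann gen ℓ a).ncard + (ball gen (ℓ - a)).ncard := by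
      exact_mod_cast ncard_ball_le_ncard_ann_add hgen ℓ a
    have hsq : ((ann gen ℓ a).ncard : ℝ) ^ 2 ≤
        (ball gen (2 * ℓ)).ncard * (ball gen (5 * a + 2 * δ)).ncard
          + (ann gen ℓ a).ncard * (ball gen (ℓ - a + 2 * δ)).ncard := by
      exact_mod_cast ncard_ann_sq_le hgen hhyp hℓ
    refine sq_sub_two_mul_le (s := (ann gen ℓ a).ncard) hd (by linarith)
      (by linarith [hcard (by linarith : (ℓ : ℝ) - a ≤ ℓ - a + 2 * δ)]) ?_
    nlinarith [hcard (by linarith : 5 * (a : ℝ) + 2 * δ ≤ 6 * a + 2 * δ)]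

/-- almost supermultiplicativity: in a `δ`-hyperbolic group, for
`1 ≤ a ≤ ℓ` with `|B_ℓ| ≥ 2|B_{ℓ-a+2δ}|`, one has
`|B_{2ℓ}| ≥ (|B_ℓ| - 2|B_{ℓ-a+2δ}|)² / |B_{6a+2δ}|`. -/
theorem statement11 {G : Type*} [Group G] {m : ℕ} (hm : 2 ≤ m) (gen : Fin m → G)
    (hgen : Subgroup.closure (Set.range gen) = ⊤)
    (δ : ℝ) (hδ : 0 ≤ δ) (hhyp : IsHyperbolic gen δ)
    (ℓ a : ℕ) (ha1 : 1 ≤ a) (ha : a ≤ ℓ)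
    (hbig : ((ball gen (ℓ : ℝ)).ncard : ℝ) ≥ 2 * ((ball gen ((ℓ : ℝ) - a + 2 * δ)).ncard : ℝ)) :
    ((ball gen (2 * (ℓ : ℝ))).ncard : ℝ) ≥
      (((ball gen (ℓ : ℝ)).ncard : ℝ) - 2 * ((ball gen ((ℓ : ℝ) - a + 2 * δ)).ncard : ℝ)) ^ 2 /
        ((ball gen (6 * (a : ℝ) + 2 * δ)).ncard : ℝ) :=
  statement11_general gen hgen δ hhyp ℓ a hbig

end GrowthRQ
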